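/- Let ζ > 0 and T > 0, and let w be a classical zero-input solution of the micro-beam system on [0,1] × [0,T]. Then the total energy is conserved: E(t) = E(0) for every t ∈ [0,T]. -/

import Mathlib

/-!
Polarise the energy: `energyForm u s = ∫ w_t(u) w_t(s) + w_xx(u) w_xx(s) + ζ w_xxx(u) w_xxx(s)`
is symmetric and `E(t) = energyForm t t / 2`. The solution has no mixed derivatives, so `E` cannot
be differentiated under the integral directly. Instead, integrating by parts in `x` with the
boundary conditions and using the equation turns the strain part of `energyForm u s` into
`-∫ w_tt(u) w(s)`, which is differentiable in `s` alone; by symmetry the derivative along the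
diagonal is twice this partial derivative, `2 ∫ (w_t w_tt - w_tt w_t) = 0`.
-/

open Set MeasureTheory intervalIntegral

/-- `wxD w m x t` is the `m`-th spatial derivative of `w` on `[0,1]`. -/
noncomputable def wxD (w : ℝ → ℝ → ℝ) (m : ℕ) (x t : ℝ) : ℝ :=
  iteratedDerivWithin m (fun x' => w x' t) (Icc (0:ℝ) 1) x

/-- `wtD w T k x t` is the `k`-th time derivative of `w` on `[0,T]`. -/
noncomputable def wtD (w : ℝ → ℝ → ℝ) (T : ℝ) (k : ℕ) (x t : ℝ) : ℝ :=
  iteratedDerivWithin k (fun t' => w x t') (Icc (0:ℝ) T) t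

/-- A classical zero-input solution of the micro-beam system on `[0,1] × [0,T]`:
`C⁶` in `x`, `C²` in `t`, jointly continuous with all these partial derivatives,
satisfying the PDE and the boundary conditions. -/
def IsBeamSolution (ζ T : ℝ) (w : ℝ → ℝ → ℝ) : Prop :=
  (∀ t ∈ Icc (0:ℝ) T, ContDiffOn ℝ 6 (fun x => w x t) (Icc (0:ℝ) 1)) ∧
  (∀ x ∈ Icc (0:ℝ) 1, ContDiffOn ℝ 2 (fun t => w x t) (Icc (0:ℝ) T)) ∧
  (∀ m : ℕ, m ≤ 6 →
    ContinuousOn (fun p : ℝ × ℝ => wxD w m p.1 p.2) (Icc (0:ℝ) 1 ×ˢ Icc (0:ℝ) T)) ∧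
  (∀ k : ℕ, k ≤ 2 →
    ContinuousOn (fun p : ℝ × ℝ => wtD w T k p.1 p.2) (Icc (0:ℝ) 1 ×ˢ Icc (0:ℝ) T)) ∧
  (∀ x ∈ Icc (0:ℝ) 1, ∀ t ∈ Icc (0:ℝ) T,
    wxD w 4 x t - ζ * wxD w 6 x t + wtD w T 2 x t = 0) ∧
  (∀ t ∈ Icc (0:ℝ) T,
    w 0 t = 0 ∧ wxD w 1 0 t = 0 ∧ wxD w 2 0 t = 0 ∧
    ζ * wxD w 5 1 t - wxD w 3 1 t = 0 ∧
    wxD w 2 1 t - ζ * wxD w 4 1 t = 0 ∧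
    ζ * wxD w 3 1 t = 0)

/-- Kinetic energy. -/
noncomputable def kinE (w : ℝ → ℝ → ℝ) (T t : ℝ) : ℝ :=
  (1/2) * ∫ x in (0:ℝ)..1, (wtD w T 1 x t)^2

/-- Strain energy. -/
noncomputable def strE (ζ : ℝ) (w : ℝ → ℝ → ℝ) (t : ℝ) : ℝ :=
  (1/2) * ∫ x in (0:ℝ)..1, ((wxD w 2 x t)^2 + ζ * (wxD w 3 x t)^2)

/-- Total energy. -/
noncomputable def totE (ζ : ℝ) (w : ℝ → ℝ → ℝ) (T t : ℝ) : ℝ :=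
  kinE w T t + strE ζ w t

open Function

theorem ContDiffOn.hasDerivWithinAt_iteratedDerivWithin {f : ℝ → ℝ} {s : Set ℝ} {n m : ℕ}
    (hf : ContDiffOn ℝ n f s) (hs : UniqueDiffOn ℝ s) (hm : m < n) {x : ℝ} (hx : x ∈ s) :
    HasDerivWithinAt (iteratedDerivWithin m f s) (iteratedDerivWithin (m + 1) f s x) s x := by
  rw [iteratedDerivWithin_succ]
  exact ((hf.differentiableOn_iteratedDerivWithin (mod_cast hm) hs) x hx).hasDerivWithinAt

theorem integral_eq_sub_of_hasDerivWithinAt_Icc {f f' : ℝ → ℝ} {α β s₀ s : ℝ}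
    (hf : ∀ t ∈ Icc α β, HasDerivWithinAt f (f' t) (Icc α β) t)
    (hf' : ContinuousOn f' (Icc α β)) (hs₀ : s₀ ∈ Icc α β) (hs : s ∈ Icc α β) :
    ∫ r in s₀..s, f' r = f s - f s₀ := by
  have hsub : uIcc s₀ s ⊆ Icc α β := uIcc_subset_Icc hs₀ hs
  refine integral_eq_sub_of_hasDeriv_right
    (fun t ht => (hf t (hsub ht)).continuousWithinAt.mono hsub) (fun t ht => ?_)
    ((hf'.mono hsub).intervalIntegrable)
  have ht' : t ∈ Ioo α β :=
    ⟨(le_min hs₀.1 hs.1).trans_lt ht.1, ht.2.trans_le (max_le hs₀.2 hs.2)⟩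
  exact ((hf t (Ioo_subset_Icc_self ht')).hasDerivAt (Icc_mem_nhds ht'.1 ht'.2)).hasDerivWithinAt

theorem continuousOn_intervalIntegral_of_continuousOn_prod {X : Type*} [TopologicalSpace X]
    [FirstCountableTopology X] {F : X → ℝ → ℝ} {S : Set X} {c d : ℝ} (hS : IsCompact S)
    (hF : ContinuousOn (uncurry F) (S ×ˢ uIcc c d)) :
    ContinuousOn (fun p => ∫ x in c..d, F p x) S := by
  obtain ⟨M, hM⟩ := (hS.prod isCompact_uIcc).exists_bound_of_continuousOn hF
  have hslice : ∀ p ∈ S, ContinuousOn (F p) (uIcc c d) := fun p hp =>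
    hF.comp (Continuous.continuousOn (f := fun x => (p, x)) (by fun_prop)) fun x hx => ⟨hp, hx⟩
  intro p hp
  refine continuousWithinAt_of_dominated_interval (bound := fun _ => M) ?_ ?_
    intervalIntegrable_const ?_
  · filter_upwards [self_mem_nhdsWithin] with q hq
    exact ((hslice q hq).mono uIoc_subset_uIcc).aestronglyMeasurable measurableSet_uIoc
  · filter_upwards [self_mem_nhdsWithin] with q hq
    exact ae_of_all _ fun x hx => hM (q, x) ⟨hq, uIoc_subset_uIcc hx⟩
  · refine ae_of_all _ fun x hx => ?_
    exact (hF.comp (Continuous.continuousOn (f := fun q => (q, x)) (by fun_prop))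
      fun q hq => ⟨hq, uIoc_subset_uIcc hx⟩) p hp

theorem integral_sub_integral_eq_integral_integral_of_hasDerivWithinAt {f g : ℝ → ℝ → ℝ}
    {c d α β s₀ s : ℝ}
    (hf : ∀ x ∈ uIcc c d, ∀ t ∈ Icc α β, HasDerivWithinAt (f x) (g x t) (Icc α β) t)
    (hg : ContinuousOn (uncurry g) (uIcc c d ×ˢ Icc α β))
    (hfi : ∀ t ∈ Icc α β, IntervalIntegrable (fun x => f x t) volume c d)
    (hs₀ : s₀ ∈ Icc α β) (hs : s ∈ Icc α β) :
    (∫ x in c..d, f x s) - ∫ x in c..d, f x s₀ = ∫ r in s₀..s, ∫ x in c..d, g x r := by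
  have hgx : ∀ x ∈ uIcc c d, ContinuousOn (g x) (Icc α β) := fun x hx =>
    hg.comp (Continuous.continuousOn (f := fun t => (x, t)) (by fun_prop)) fun t ht => ⟨hx, ht⟩
  have hgi : IntegrableOn (uncurry g) (uIoc c d ×ˢ uIoc s₀ s) :=
    ((hg.mono (prod_mono subset_rfl (uIcc_subset_Icc hs₀ hs))).integrableOn_compact
      (isCompact_uIcc.prod isCompact_uIcc)).mono_set
      (prod_mono uIoc_subset_uIcc uIoc_subset_uIcc)
  rw [← integral_sub (hfi s hs) (hfi s₀ hs₀), ← intervalIntegral_intervalIntegral_swap hgi]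
  exact integral_congr fun x hx =>
    (integral_eq_sub_of_hasDerivWithinAt_Icc (hf x hx) (hgx x hx) hs₀ hs).symm

theorem hasDerivWithinAt_diagonal_of_symmetric {a Q : ℝ → ℝ → ℝ} {α β t : ℝ}
    (hsymm : ∀ u ∈ Icc α β, ∀ s ∈ Icc α β, a u s = a s u)
    (hQ : ContinuousOn (uncurry Q) (Icc α β ×ˢ Icc α β))
    (hinc : ∀ u ∈ Icc α β, ∀ s₀ ∈ Icc α β, ∀ s ∈ Icc α β, a u s - a u s₀ = ∫ r in s₀..s, Q r u)
    (ht : t ∈ Icc α β) :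
    HasDerivWithinAt (fun t => a t t) (2 * Q t t) (Icc α β) t := by
  have hQi : ∀ u ∈ Icc α β, ∀ s ∈ Icc α β, IntervalIntegrable (fun r => Q r u) volume t s :=
    fun u hu s hs => ((hQ.comp (Continuous.continuousOn (f := fun r => (r, u)) (by fun_prop))
      fun r hr => ⟨hr, hu⟩).mono (uIcc_subset_Icc ht hs)).intervalIntegrable
  -- symmetry moves the increment along the diagonal onto the two sides of a square
  have hdiag : ∀ s ∈ Icc α β, a s s - a t t - (s - t) • (2 * Q t t) =
      ∫ r in t..s, ((Q r s - Q t t) + (Q r t - Q t t)) := by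
    intro s hs
    have h₁ := hinc s hs t ht s hs
    have h₂ := hinc t ht t ht s hs
    rw [hsymm s hs t ht] at h₁
    rw [integral_add ((hQi s hs s hs).sub intervalIntegrable_const)
      ((hQi t ht s hs).sub intervalIntegrable_const), integral_sub (hQi s hs s hs)
      intervalIntegrable_const, integral_sub (hQi t ht s hs) intervalIntegrable_const,
      intervalIntegral.integral_const, smul_eq_mul, smul_eq_mul]
    linarith
  rw [hasDerivWithinAt_iff_isLittleO, Asymptotics.isLittleO_iff]
  intro ε hε
  obtain ⟨δ, hδ, hQδ⟩ := Metric.continuousWithinAt_iff.1 (hQ (t, t) ⟨ht, ht⟩) (ε / 2) (half_pos hε)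
  filter_upwards [self_mem_nhdsWithin, inter_mem_nhdsWithin (Icc α β) (Metric.ball_mem_nhds t hδ)]
    with s hs hsδ
  have hclose : ∀ r ∈ uIoc t s, ∀ u ∈ Icc α β, dist u t < δ → ‖Q r u - Q t t‖ ≤ ε / 2 := by
    intro r hr u hu hut
    have hrI : r ∈ Icc α β := uIcc_subset_Icc ht hs (uIoc_subset_uIcc hr)
    have hrt : dist r t < δ := by
      rw [dist_comm]
      exact (Real.dist_left_le_of_mem_uIcc (uIoc_subset_uIcc hr)).trans_lt
        (by simpa [dist_comm] using hsδ.2)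
    have hQ := hQδ (x := (r, u)) ⟨hrI, hu⟩ (by rw [Prod.dist_eq]; exact max_lt hrt hut)
    exact hQ.le
  rw [hdiag s hs]
  calc ‖∫ r in t..s, ((Q r s - Q t t) + (Q r t - Q t t))‖ ≤ (ε / 2 + ε / 2) * |s - t| :=
        norm_integral_le_of_norm_le_const fun r hr => (norm_add_le _ _).trans
          (add_le_add (hclose r hr s hs hsδ.2) (hclose r hr t ht (by simpa using hδ)))
    _ = ε * ‖s - t‖ := by rw [add_halves, Real.norm_eq_abs]

theorem integral_beam_by_parts {ζ a b : ℝ} (hab : a < b) {f g : ℝ → ℝ}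
    (hf : ContDiffOn ℝ 6 f (Icc a b)) (hg : ContDiffOn ℝ 3 g (Icc a b))
    (hg₀ : g a = 0) (hg₁ : iteratedDerivWithin 1 g (Icc a b) a = 0)
    (hg₂ : iteratedDerivWithin 2 g (Icc a b) a = 0)
    (hf₅ : ζ * iteratedDerivWithin 5 f (Icc a b) b - iteratedDerivWithin 3 f (Icc a b) b = 0)
    (hf₄ : iteratedDerivWithin 2 f (Icc a b) b - ζ * iteratedDerivWithin 4 f (Icc a b) b = 0)
    (hf₃ : ζ * iteratedDerivWithin 3 f (Icc a b) b = 0) :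
    ∫ x in a..b, (iteratedDerivWithin 2 f (Icc a b) x * iteratedDerivWithin 2 g (Icc a b) x +
        ζ * (iteratedDerivWithin 3 f (Icc a b) x * iteratedDerivWithin 3 g (Icc a b) x)) =
      ∫ x in a..b, (iteratedDerivWithin 4 f (Icc a b) x -
        ζ * iteratedDerivWithin 6 f (Icc a b) x) * g x := by
  set s := Icc a b
  have hs : UniqueDiffOn ℝ s := uniqueDiffOn_Icc hab
  have ha : a ∈ s := left_mem_Icc.2 hab.le
  have hb : b ∈ s := right_mem_Icc.2 hab.le
  set Df := fun m => iteratedDerivWithin m f s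
  set Dg := fun m => iteratedDerivWithin m g s
  have df : ∀ m < 6, ∀ x ∈ s, HasDerivWithinAt (Df m) (Df (m + 1) x) s x :=
    fun m hm x hx => hf.hasDerivWithinAt_iteratedDerivWithin hs (by exact_mod_cast hm) hx
  have dg : ∀ m < 3, ∀ x ∈ s, HasDerivWithinAt (Dg m) (Dg (m + 1) x) s x :=
    fun m hm x hx => hg.hasDerivWithinAt_iteratedDerivWithin hs (by exact_mod_cast hm) hx
  have cf : ∀ m ≤ 6, ContinuousOn (Df m) s :=
    fun m hm => hf.continuousOn_iteratedDerivWithin (by exact_mod_cast hm) hs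
  have cg : ∀ m ≤ 3, ContinuousOn (Dg m) s :=
    fun m hm => hg.continuousOn_iteratedDerivWithin (by exact_mod_cast hm) hs
  have hDg₀ : Dg 0 = g := iteratedDerivWithin_zero
  -- the boundary terms of the integrations by parts
  set B := fun x => Df 2 x * Dg 1 x - Df 3 x * Dg 0 x +
    ζ * (Df 3 x * Dg 2 x - Df 4 x * Dg 1 x + Df 5 x * Dg 0 x)
  have hB : ∀ x ∈ s, HasDerivWithinAt B ((Df 2 x * Dg 2 x + ζ * (Df 3 x * Dg 3 x)) -
      (Df 4 x - ζ * Df 6 x) * Dg 0 x) s x := by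
    intro x hx
    have := (((df 2 (by norm_num) x hx).mul (dg 1 (by norm_num) x hx)).sub
      ((df 3 (by norm_num) x hx).mul (dg 0 (by norm_num) x hx))).add
      (((((df 3 (by norm_num) x hx).mul (dg 2 (by norm_num) x hx)).sub
      ((df 4 (by norm_num) x hx).mul (dg 1 (by norm_num) x hx))).add
      ((df 5 (by norm_num) x hx).mul (dg 0 (by norm_num) x hx))).const_mul ζ)
    refine this.congr_deriv ?_
    simp only [Nat.reduceAdd]
    ring
  have hstrain : ContinuousOn (fun x => Df 2 x * Dg 2 x + ζ * (Df 3 x * Dg 3 x)) s :=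
    ((cf 2 (by norm_num)).mul (cg 2 (by norm_num))).add
      (continuousOn_const.mul ((cf 3 (by norm_num)).mul (cg 3 (by norm_num))))
  have hload : ContinuousOn (fun x => (Df 4 x - ζ * Df 6 x) * Dg 0 x) s :=
    ((cf 4 (by norm_num)).sub (continuousOn_const.mul (cf 6 (by norm_num)))).mul
      (cg 0 (by norm_num))
  have hftc := integral_eq_sub_of_hasDerivWithinAt_Icc hB (hstrain.sub hload) ha hb
  have hBb : B b = 0 := by
    simp only [B, Df, Dg]
    linear_combination Dg 1 b * hf₄ + Dg 0 b * hf₅ + Dg 2 b * hf₃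
  have hBa : B a = 0 := by
    simp only [B, Df, Dg, hDg₀]
    linear_combination (Df 2 a - ζ * Df 4 a) * hg₁ + (ζ * Df 5 a - Df 3 a) * hg₀ +
      ζ * Df 3 a * hg₂
  rw [hBb, hBa, sub_zero, integral_sub (hstrain.intervalIntegrable_of_Icc hab.le)
    (hload.intervalIntegrable_of_Icc hab.le), sub_eq_zero, hDg₀] at hftc
  exact hftc

noncomputable def energyForm (ζ T : ℝ) (w : ℝ → ℝ → ℝ) (u s : ℝ) : ℝ :=
  (∫ x in (0:ℝ)..1, wtD w T 1 x u * wtD w T 1 x s) +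
    ∫ x in (0:ℝ)..1, (wxD w 2 x u * wxD w 2 x s + ζ * (wxD w 3 x u * wxD w 3 x s))

/-- `∂ₛ energyForm u s` at `s = r`, once the equation of motion has turned the strain part of
`energyForm u s` into `-∫ w_tt(u) w(s)`. -/
noncomputable def energyFormDeriv (T : ℝ) (w : ℝ → ℝ → ℝ) (r u : ℝ) : ℝ :=
  ∫ x in (0:ℝ)..1, (wtD w T 1 x u * wtD w T 2 x r - wtD w T 2 x u * wtD w T 1 x r)

theorem energyForm_comm (ζ T : ℝ) (w : ℝ → ℝ → ℝ) (u s : ℝ) :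
    energyForm ζ T w u s = energyForm ζ T w s u := by
  simp only [energyForm, mul_comm (wtD w T 1 _ u), mul_comm (wxD w 2 _ u), mul_comm (wxD w 3 _ u)]

theorem totE_eq_energyForm (ζ T : ℝ) (w : ℝ → ℝ → ℝ) (t : ℝ) :
    totE ζ w T t = energyForm ζ T w t t / 2 := by
  simp only [totE, kinE, strE, energyForm, sq]
  ring

theorem energyFormDeriv_self (T : ℝ) (w : ℝ → ℝ → ℝ) (t : ℝ) : energyFormDeriv T w t t = 0 := by
  simp [energyFormDeriv, mul_comm]

theorem wtD_zero (w : ℝ → ℝ → ℝ) (T : ℝ) : wtD w T 0 = w := by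
  funext x t
  simp [wtD]

namespace IsBeamSolution

variable {ζ T : ℝ} {w : ℝ → ℝ → ℝ}

theorem continuousOn_wtD_comp {X : Type*} [TopologicalSpace X] (hw : IsBeamSolution ζ T w)
    {k : ℕ} (hk : k ≤ 2) {φ ψ : X → ℝ} {S : Set X} (hφ : Continuous φ) (hψ : Continuous ψ)
    (hS : MapsTo (fun p => (φ p, ψ p)) S (Icc 0 1 ×ˢ Icc 0 T)) :
    ContinuousOn (fun p => wtD w T k (φ p) (ψ p)) S :=
  (hw.2.2.2.1 k hk).comp (hφ.prodMk hψ).continuousOn hS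

theorem continuousOn_wtD (hw : IsBeamSolution ζ T w) {k : ℕ} (hk : k ≤ 2) {t : ℝ}
    (ht : t ∈ Icc 0 T) : ContinuousOn (fun x => wtD w T k x t) (Icc 0 1) :=
  hw.continuousOn_wtD_comp hk continuous_id continuous_const fun _ hx => ⟨hx, ht⟩

theorem hasDerivWithinAt_wtD (hw : IsBeamSolution ζ T w) (hT : 0 < T) {k : ℕ} (hk : k < 2)
    {x t : ℝ} (hx : x ∈ Icc 0 1) (ht : t ∈ Icc 0 T) :
    HasDerivWithinAt (wtD w T k x) (wtD w T (k + 1) x t) (Icc 0 T) t :=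
  (hw.2.1 x hx).hasDerivWithinAt_iteratedDerivWithin (uniqueDiffOn_Icc hT) (mod_cast hk) ht

theorem integral_strain_eq (hw : IsBeamSolution ζ T w) {u s : ℝ} (hu : u ∈ Icc 0 T)
    (hs : s ∈ Icc 0 T) :
    ∫ x in (0:ℝ)..1, (wxD w 2 x u * wxD w 2 x s + ζ * (wxD w 3 x u * wxD w 3 x s)) =
      -∫ x in (0:ℝ)..1, wtD w T 2 x u * w x s := by
  obtain ⟨-, -, -, hf₅, hf₄, hf₃⟩ := hw.2.2.2.2.2 u hu
  obtain ⟨hg₀, hg₁, hg₂, -⟩ := hw.2.2.2.2.2 s hs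
  refine (integral_beam_by_parts one_pos (hw.1 u hu) ((hw.1 s hs).of_le (by norm_num)) hg₀ hg₁
    hg₂ hf₅ hf₄ hf₃).trans ?_
  rw [← intervalIntegral.integral_neg]
  refine integral_congr fun x hx => ?_
  rw [uIcc_of_le zero_le_one] at hx
  change (wxD w 4 x u - ζ * wxD w 6 x u) * w x s = _
  linear_combination w x s * hw.2.2.2.2.1 x hx u hu

theorem energyForm_eq (hw : IsBeamSolution ζ T w) {u s : ℝ} (hu : u ∈ Icc 0 T)
    (hs : s ∈ Icc 0 T) :
    energyForm ζ T w u s =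
      ∫ x in (0:ℝ)..1, (wtD w T 1 x u * wtD w T 1 x s - wtD w T 2 x u * w x s) := by
  rw [energyForm, hw.integral_strain_eq hu hs, intervalIntegral.integral_sub, sub_eq_add_neg]
  · exact ((hw.continuousOn_wtD (by norm_num) hu).mul
      (hw.continuousOn_wtD (by norm_num) hs)).intervalIntegrable_of_Icc zero_le_one
  · exact ((hw.continuousOn_wtD (by norm_num) hu).mul
      (hw.1 s hs).continuousOn).intervalIntegrable_of_Icc zero_le_one

theorem energyForm_sub_energyForm (hw : IsBeamSolution ζ T w) (hT : 0 < T) {u s₀ s : ℝ}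
    (hu : u ∈ Icc 0 T) (hs₀ : s₀ ∈ Icc 0 T) (hs : s ∈ Icc 0 T) :
    energyForm ζ T w u s - energyForm ζ T w u s₀ = ∫ r in s₀..s, energyFormDeriv T w r u := by
  have hI : uIcc (0:ℝ) 1 = Icc 0 1 := uIcc_of_le zero_le_one
  rw [hw.energyForm_eq hu hs, hw.energyForm_eq hu hs₀]
  refine integral_sub_integral_eq_integral_integral_of_hasDerivWithinAt
    (f := fun x t => wtD w T 1 x u * wtD w T 1 x t - wtD w T 2 x u * w x t) ?_ ?_ ?_ hs₀ hs
  · intro x hx t ht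
    rw [hI] at hx
    have hw' := hw.hasDerivWithinAt_wtD hT two_pos hx ht
    rw [wtD_zero] at hw'
    exact ((hw.hasDerivWithinAt_wtD hT one_lt_two hx ht).const_mul _).sub (hw'.const_mul _)
  · rw [hI]
    have h : ∀ k ≤ 2, ContinuousOn (fun p : ℝ × ℝ => wtD w T k p.1 u) (Icc 0 1 ×ˢ Icc 0 T) :=
      fun k hk => hw.continuousOn_wtD_comp hk continuous_fst continuous_const fun p hp => ⟨hp.1, hu⟩
    exact ((h 1 (by norm_num)).mul (hw.2.2.2.1 2 le_rfl)).sub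
      ((h 2 le_rfl).mul (hw.2.2.2.1 1 (by norm_num)))
  · intro t ht
    have hu₁ := hw.continuousOn_wtD (k := 1) (by norm_num) hu
    have hu₂ := hw.continuousOn_wtD (k := 2) le_rfl hu
    exact ((hu₁.mul (hw.continuousOn_wtD (by norm_num) ht)).sub
      (hu₂.mul (hw.1 t ht).continuousOn)).intervalIntegrable_of_Icc zero_le_one

theorem continuousOn_energyFormDeriv (hw : IsBeamSolution ζ T w) :
    ContinuousOn (uncurry (energyFormDeriv T w)) (Icc 0 T ×ˢ Icc 0 T) := by
  have key : ContinuousOn (fun q : (ℝ × ℝ) × ℝ => wtD w T 1 q.2 q.1.2 * wtD w T 2 q.2 q.1.1 -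
      wtD w T 2 q.2 q.1.2 * wtD w T 1 q.2 q.1.1) ((Icc 0 T ×ˢ Icc 0 T) ×ˢ uIcc 0 1) := by
    rw [uIcc_of_le zero_le_one]
    have h : ∀ k ≤ 2, ∀ i : ℝ × ℝ → ℝ, Continuous i → MapsTo i (Icc 0 T ×ˢ Icc 0 T) (Icc 0 T) →
        ContinuousOn (fun q : (ℝ × ℝ) × ℝ => wtD w T k q.2 (i q.1))
          ((Icc 0 T ×ˢ Icc 0 T) ×ˢ Icc 0 1) :=
      fun k hk i hi hiI => hw.continuousOn_wtD_comp hk continuous_snd (hi.comp continuous_fst)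
        fun q hq => ⟨hq.2, hiI hq.1⟩
    exact ((h 1 (by norm_num) _ continuous_snd fun p hp => hp.2).mul
      (h 2 le_rfl _ continuous_fst fun p hp => hp.1)).sub
      ((h 2 le_rfl _ continuous_snd fun p hp => hp.2).mul
        (h 1 (by norm_num) _ continuous_fst fun p hp => hp.1))
  exact continuousOn_intervalIntegral_of_continuousOn_prod (isCompact_Icc.prod isCompact_Icc) key

end IsBeamSolution

theorem stmt_14_general (ζ T : ℝ) (hT : 0 < T)
    (w : ℝ → ℝ → ℝ) (hw : IsBeamSolution ζ T w) :
    ∀ t ∈ Icc (0:ℝ) T, totE ζ w T t = totE ζ w T 0 := by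
  have hderiv : ∀ t ∈ Icc 0 T,
      HasDerivWithinAt (fun t => energyForm ζ T w t t) 0 (Icc 0 T) t := fun t ht => by
    simpa only [energyFormDeriv_self, mul_zero] using hasDerivWithinAt_diagonal_of_symmetric
      (fun u _ s _ => energyForm_comm ζ T w u s) hw.continuousOn_energyFormDeriv
      (fun u hu s₀ hs₀ s hs => hw.energyForm_sub_energyForm hT hu hs₀ hs) ht
  have hconst := constant_of_has_deriv_right_zero (fun t ht => (hderiv t ht).continuousWithinAt)
    fun t ht =>
      (hderiv t (Ico_subset_Icc_self ht)).mono_of_mem_nhdsWithin (Icc_mem_nhdsGE_of_mem ht)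
  intro t ht
  rw [totE_eq_energyForm, totE_eq_energyForm, hconst t ht]

/-- Conservation of total energy for classical zero-input solutions of the
micro-beam system. -/
theorem stmt_14 (ζ T : ℝ) (hζ : 0 < ζ) (hT : 0 < T)
    (w : ℝ → ℝ → ℝ) (hw : IsBeamSolution ζ T w) :
    ∀ t ∈ Icc (0:ℝ) T, totE ζ w T t = totE ζ w T 0 :=
  stmt_14_general ζ T hT w hw
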